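/- For all nonnegative integers a, b, n with a + b ≤ n, the quantity Δ₁(n,a,b) := 2 · ∑_{j=1}^{b} H_{n+1−j−a} · (b − 1 + κ_{j−1} + κ_{b−j} − κ_b) is nonpositive: Δ₁(n,a,b) ≤ 0. -/

import Mathlib

open Finset Filter Topology

/-- The `n`-th harmonic number `H_n = ∑_{i=1}^n 1/i`. -/
noncomputable def H (n : ℕ) : ℝ := ∑ i ∈ Finset.range n, (1 : ℝ) / (i + 1)

/-- `κ_n = 2(n+1)H_n - 4n`, the mean number of key comparisons for QuickSort on `n` keys. -/
noncomputable def κ (n : ℕ) : ℝ := 2 * (n + 1) * H n - 4 * n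

/-!
Write `c_j = b - 1 + κ_{j-1} + κ_{b-j} - κ_b`. The partial sums `S_j = c_1 + ⋯ + c_j` have a
closed form in harmonic numbers, from which `S_0 = S_b = 0`, `S_{b-j} = -S_j`, and `S_j ≥ 0`
for `2j ≤ b` (the last by bounding differences of harmonic numbers by their extreme terms).
Abel summation turns `∑ w_j c_j`, with `w_j = H_{n+1-j-a}`, into `∑_{j ≤ b} S_j D_j` with
`D_j = w_j - w_{j+1} = 1/(n-a-j+1)` increasing in `j`. Pairing `j` with `b - j` gives
`2 ∑ S_j D_j = ∑ S_j (D_j - D_{b-j})`, and every term is `≤ 0` because `S_j` and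
`D_j - D_{b-j}` have opposite signs on either side of `b/2`.
-/

lemma H_succ (n : ℕ) : H (n + 1) = H n + 1 / ((n : ℝ) + 1) := by
  simp [H, Finset.sum_range_succ]

lemma H_sub_eq_sum_Ico {m k : ℕ} (h : m ≤ k) :
    H k - H m = ∑ i ∈ Ico m k, (1 : ℝ) / (i + 1) := by
  rw [H, H, range_eq_Ico, range_eq_Ico, ← sum_Ico_consecutive _ (Nat.zero_le m) h]
  ring

lemma div_le_H_sub {m k : ℕ} (h : m ≤ k) : ((k : ℝ) - m) / k ≤ H k - H m := by
  rw [H_sub_eq_sum_Ico h]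
  calc ((k : ℝ) - m) / k = ∑ _i ∈ Ico m k, (1 : ℝ) / k := by
        rw [sum_const, Nat.card_Ico, nsmul_eq_mul, Nat.cast_sub h]
        ring
    _ ≤ ∑ i ∈ Ico m k, (1 : ℝ) / (i + 1) := by
        refine sum_le_sum fun i hi => one_div_le_one_div_of_le (by positivity) ?_
        exact_mod_cast (mem_Ico.1 hi).2

lemma H_sub_le_div {m k : ℕ} (h : m ≤ k) : H k - H m ≤ ((k : ℝ) - m) / (m + 1) := by
  rw [H_sub_eq_sum_Ico h]
  calc ∑ i ∈ Ico m k, (1 : ℝ) / (i + 1) ≤ ∑ _i ∈ Ico m k, (1 : ℝ) / (m + 1) := by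
        refine sum_le_sum fun i hi => one_div_le_one_div_of_le (by positivity) ?_
        exact_mod_cast Nat.succ_le_succ (mem_Ico.1 hi).1
    _ = ((k : ℝ) - m) / (m + 1) := by
        rw [sum_const, Nat.card_Ico, nsmul_eq_mul, Nat.cast_sub h]
        ring

lemma monotoneOn_H_sub_H_succ_sub (k : ℕ) :
    MonotoneOn (fun j => H (k - j) - H (k - (j + 1))) (Set.Iio k) := by
  intro i hi j hj hij
  have hi' : k - i = k - (i + 1) + 1 := by simp only [Set.mem_Iio] at hi; omega
  have hj' : k - j = k - (j + 1) + 1 := by simp only [Set.mem_Iio] at hj; omega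
  simp only [hi', hj', H_succ, add_sub_cancel_left]
  refine one_div_le_one_div_of_le (by positivity) ?_
  gcongr

lemma sum_range_sub_mul_by_parts (S w : ℕ → ℝ) (b : ℕ) :
    ∑ j ∈ range b, (S (j + 1) - S j) * w (j + 1)
      = S b * w b - S 0 * w 0 + ∑ j ∈ range b, S j * (w j - w (j + 1)) := by
  induction b with
  | zero => simp
  | succ b ih =>
    rw [sum_range_succ, sum_range_succ, ih]
    ring

lemma sum_mul_nonpos_of_antisymm (S D : ℕ → ℝ) (b : ℕ) (hS : ∀ j ≤ b, S (b - j) = -S j)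
    (hS_nonneg : ∀ j, 2 * j ≤ b → 0 ≤ S j) (hD : MonotoneOn D (Set.Iic b)) :
    ∑ j ∈ range (b + 1), S j * D j ≤ 0 := by
  have hpair : 2 * ∑ j ∈ range (b + 1), S j * D j
      = ∑ j ∈ range (b + 1), S j * (D j - D (b - j)) := by
    rw [two_mul]
    nth_rw 2 [← sum_range_reflect]
    rw [← sum_add_distrib]
    refine sum_congr rfl fun j hj => ?_
    rw [Nat.add_sub_cancel, hS j (Nat.lt_succ_iff.1 (mem_range.1 hj))]
    ring
  have hterm : ∀ j ∈ range (b + 1), S j * (D j - D (b - j)) ≤ 0 := by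
    intro j hj
    have hjb : j ≤ b := Nat.lt_succ_iff.1 (mem_range.1 hj)
    have hbj : b - j ∈ Set.Iic b := Nat.sub_le b j
    rcases le_total (2 * j) b with hle | hle
    · have hDle : D j ≤ D (b - j) := hD hjb hbj (by omega)
      nlinarith [hS_nonneg j hle]
    · have hSj : S j ≤ 0 := by
        have := hS_nonneg (b - j) (by omega)
        rwa [hS j hjb, neg_nonneg] at this
      have hDle : D (b - j) ≤ D j := hD hbj hjb (by omega)
      nlinarith
  linarith [sum_nonpos hterm]

noncomputable def delta1Coeff (b j : ℕ) : ℝ := (b : ℝ) - 1 + κ (j - 1) + κ (b - j) - κ b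

/-- Closed form of the partial sums `∑_{i=1}^j delta1Coeff b i` (see `delta1CoeffSum_succ`). -/
noncomputable def delta1CoeffSum (b j : ℕ) : ℝ :=
  (b + 1) * ((b : ℝ) - 2 * j) * H b + j * (j + 1) * H j
    - ((b : ℝ) - j) * ((b : ℝ) - j + 1) * H (b - j)

lemma delta1CoeffSum_zero (b : ℕ) : delta1CoeffSum b 0 = 0 := by
  simp only [delta1CoeffSum, Nat.sub_zero, Nat.cast_zero]
  ring

lemma delta1CoeffSum_sub {b j : ℕ} (h : j ≤ b) :
    delta1CoeffSum b (b - j) = -delta1CoeffSum b j := by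
  unfold delta1CoeffSum
  rw [Nat.sub_sub_self h, Nat.cast_sub h]
  ring

lemma delta1CoeffSum_self (b : ℕ) : delta1CoeffSum b b = 0 := by
  simpa [delta1CoeffSum_zero] using delta1CoeffSum_sub (Nat.zero_le b)

lemma delta1CoeffSum_succ {b j : ℕ} (h : j + 1 ≤ b) :
    delta1CoeffSum b (j + 1) = delta1CoeffSum b j + delta1Coeff b (j + 1) := by
  obtain ⟨m, rfl⟩ : ∃ m, b = j + 1 + m := ⟨b - (j + 1), by omega⟩
  unfold delta1CoeffSum delta1Coeff κ
  simp only [show j + 1 + m - j = m + 1 by omega, show j + 1 + m - (j + 1) = m by omega,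
    Nat.add_sub_cancel, H_succ j, H_succ m]
  push_cast
  field_simp
  ring

lemma delta1CoeffSum_nonneg {b j : ℕ} (h : 2 * j ≤ b) : 0 ≤ delta1CoeffSum b j := by
  rcases Nat.eq_zero_or_pos j with rfl | hj
  · rw [delta1CoeffSum_zero]
  have hb : (0 : ℝ) < b := by exact_mod_cast (show 0 < b by omega)
  have h2j : (2 * j : ℝ) ≤ b := by exact_mod_cast h
  have hcast : ((b - j : ℕ) : ℝ) = b - j := Nat.cast_sub (by omega)
  have hlow := div_le_H_sub (Nat.sub_le b j)
  have hupp := H_sub_le_div (show j ≤ b - j by omega)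
  rw [hcast, sub_sub_cancel] at hlow
  rw [hcast] at hupp
  calc (0 : ℝ) ≤ j * (b - 2 * j) / b := by
        have : (0 : ℝ) ≤ b - 2 * j := by linarith
        positivity
    _ = (b + 1) * (b - 2 * j) * (j / b) - j * (j + 1) * ((b - j - j) / (j + 1)) := by
        field_simp
        ring
    _ ≤ (b + 1) * (b - 2 * j) * (H b - H (b - j)) - j * (j + 1) * (H (b - j) - H j) := by
        gcongr
    _ = delta1CoeffSum b j := by
        unfold delta1CoeffSum
        ring

lemma sum_Icc_mul_delta1Coeff (w : ℕ → ℝ) (b : ℕ) :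
    ∑ j ∈ Icc 1 b, w j * delta1Coeff b j
      = ∑ j ∈ range (b + 1), delta1CoeffSum b j * (w j - w (j + 1)) := by
  rw [sum_range_succ, delta1CoeffSum_self, zero_mul, add_zero, ← Ico_add_one_right_eq_Icc,
    sum_Ico_eq_sum_range, Nat.add_sub_cancel]
  calc ∑ j ∈ range b, w (1 + j) * delta1Coeff b (1 + j)
      = ∑ j ∈ range b, (delta1CoeffSum b (j + 1) - delta1CoeffSum b j) * w (j + 1) := by
        refine sum_congr rfl fun j hj => ?_
        rw [delta1CoeffSum_succ (mem_range.1 hj), add_comm 1 j]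
        ring
    _ = ∑ j ∈ range b, delta1CoeffSum b j * (w j - w (j + 1)) := by
        rw [sum_range_sub_mul_by_parts, delta1CoeffSum_self, delta1CoeffSum_zero]
        ring

theorem delta1_nonpos (a b n : ℕ) (h : a + b ≤ n) :
    2 * ∑ j ∈ Finset.Icc 1 b,
      H (n + 1 - j - a) * ((b : ℝ) - 1 + κ (j - 1) + κ (b - j) - κ b) ≤ 0 := by
  have hD : MonotoneOn (fun j => H (n + 1 - j - a) - H (n + 1 - (j + 1) - a)) (Set.Iic b) := by
    simp only [Nat.sub_right_comm _ _ a]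
    exact (monotoneOn_H_sub_H_succ_sub (n + 1 - a)).mono (Set.Iic_subset_Iio.2 (by omega))
  have hsum := sum_mul_nonpos_of_antisymm _ _ b (fun _ => delta1CoeffSum_sub)
    (fun _ => delta1CoeffSum_nonneg) hD
  rw [← sum_Icc_mul_delta1Coeff] at hsum
  simp only [delta1Coeff] at hsum
  linarith
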